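/- Let n, m be positive integers and let η > 1 be a real number. Let A be an n×n, B an n×m, C an m×n and D an m×m complex matrix with I_m + D invertible, and let H be an n×n Hermitian positive-definite matrix. Define Â = A − B(I_m + D)^{-1}C, B̂ = −√2·B(I_m + D)^{-1}, Ĉ = √2·(I_m + D)^{-1}C, and D̂ = (I_m + D)^{-1}(I_m − D). Suppose the (n+m)×(n+m) block matrix [[−HÂ − Â*H, −HB̂], [−B̂*H, I_m]] − ((η+1)/(η−1)) · [[Ĉ*Ĉ, Ĉ*D̂], [D̂*Ĉ, D̂*D̂]] is positive semidefinite. Then for every s ∈ ℂ with Re s > 0 at which s·I_n − A is invertible, setting F(s) = C(s·I_n − A)^{-1}B + D, the matrix η·(F(s)* + F(s)) − (F(s)*F(s) + I_m) is positive semidefinite. (This is the sufficiency direction of the Kalman–Yakubovich–Popov lemma for the class HP_η of quantitatively hyper-positive real functions.) -/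

import Mathlib

open Matrix ComplexOrder

private lemma star_elim {k l : Type*} (a : k → ℂ) (b : l → ℂ) :
    star (Sum.elim a b) = Sum.elim (star a) (star b) := by
  funext i; cases i <;> rfl

private lemma hd {k l p : Type*} [Fintype k] [Fintype l] [Fintype p]
    (M : Matrix k l ℂ) (N : Matrix k p ℂ) (a : l → ℂ) (b : p → ℂ) :
    star a ⬝ᵥ ((Mᴴ * N) *ᵥ b) = star (M *ᵥ a) ⬝ᵥ (N *ᵥ b) := by
  rw [← Matrix.mulVec_mulVec, Matrix.dotProduct_mulVec, Matrix.star_mulVec]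

private lemma hd1 {k l : Type*} [Fintype k] [Fintype l]
    (M : Matrix k l ℂ) (a : l → ℂ) (b : k → ℂ) :
    star a ⬝ᵥ (Mᴴ *ᵥ b) = star (M *ᵥ a) ⬝ᵥ b := by
  rw [Matrix.dotProduct_mulVec, Matrix.star_mulVec]

theorem kyp_HP_eta_sufficiency
    (n m : ℕ) (hn : 0 < n) (hm : 0 < m) (η : ℝ) (hη : 1 < η)
    (A : Matrix (Fin n) (Fin n) ℂ) (B : Matrix (Fin n) (Fin m) ℂ)
    (C : Matrix (Fin m) (Fin n) ℂ) (D : Matrix (Fin m) (Fin m) ℂ)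
    (hD : IsUnit (1 + D))
    (H : Matrix (Fin n) (Fin n) ℂ) (hH : H.PosDef)
    (Ahat : Matrix (Fin n) (Fin n) ℂ) (Bhat : Matrix (Fin n) (Fin m) ℂ)
    (Chat : Matrix (Fin m) (Fin n) ℂ) (Dhat : Matrix (Fin m) (Fin m) ℂ)
    (hAhat : Ahat = A - B * (1 + D)⁻¹ * C)
    (hBhat : Bhat = -((Real.sqrt 2 : ℂ) • (B * (1 + D)⁻¹)))
    (hChat : Chat = (Real.sqrt 2 : ℂ) • ((1 + D)⁻¹ * C))
    (hDhat : Dhat = (1 + D)⁻¹ * (1 - D))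
    (hQ : (Matrix.fromBlocks (-(H * Ahat) - Ahatᴴ * H) (-(H * Bhat))
        (-(Bhatᴴ * H)) (1 : Matrix (Fin m) (Fin m) ℂ) -
      ((η + 1) / (η - 1)) • Matrix.fromBlocks (Chatᴴ * Chat) (Chatᴴ * Dhat)
        (Dhatᴴ * Chat) (Dhatᴴ * Dhat)).PosSemidef) :
    ∀ s : ℂ, 0 < s.re →
      IsUnit (s • (1 : Matrix (Fin n) (Fin n) ℂ) - A) →
      (η • ((C * (s • (1 : Matrix (Fin n) (Fin n) ℂ) - A)⁻¹ * B + D)ᴴ +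
          (C * (s • (1 : Matrix (Fin n) (Fin n) ℂ) - A)⁻¹ * B + D)) -
        ((C * (s • (1 : Matrix (Fin n) (Fin n) ℂ) - A)⁻¹ * B + D)ᴴ *
          (C * (s • (1 : Matrix (Fin n) (Fin n) ℂ) - A)⁻¹ * B + D) + 1)).PosSemidef := by
  intro s hs hsA
  set R : Matrix (Fin n) (Fin n) ℂ := s • (1 : Matrix (Fin n) (Fin n) ℂ) - A with hR
  set F : Matrix (Fin m) (Fin m) ℂ := C * R⁻¹ * B + D with hF
  have hRinv : R * R⁻¹ = 1 := Matrix.mul_nonsing_inv _ ((Matrix.isUnit_iff_isUnit_det R).mp hsA)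
  have hEDinv : (1 + D)⁻¹ * (1 + D) = 1 :=
    Matrix.nonsing_inv_mul _ ((Matrix.isUnit_iff_isUnit_det _).mp hD)
  set c : ℂ := ((Real.sqrt 2 : ℝ) : ℂ) with hcdef
  have hc2 : c * c = 2 := by
    rw [hcdef, ← Complex.ofReal_mul, Real.mul_self_sqrt (by norm_num)]; norm_num
  have hcne : c ≠ 0 := by
    intro hzero; rw [hzero, mul_zero] at hc2; exact two_ne_zero hc2.symm
  have hcinv : c⁻¹ = (2⁻¹ : ℂ) * c := by
    field_simp
    linear_combination -hc2
  have hcstar : star (c⁻¹) = c⁻¹ := by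
    rw [hcdef, ← Complex.ofReal_inv, Complex.star_def, Complex.conj_ofReal]
  have hii : c⁻¹ * c⁻¹ = 2⁻¹ := by rw [← mul_inv, hc2]
  refine Matrix.posSemidef_iff_dotProduct_mulVec.mpr ⟨?_, ?_⟩
  · -- Hermitian part
    have h1 : (Fᴴ + F).IsHermitian := by
      unfold Matrix.IsHermitian
      simp [Matrix.conjTranspose_add, add_comm]
    have h2 : (Fᴴ * F + 1).IsHermitian :=
      (Matrix.isHermitian_conjTranspose_mul_self F).add Matrix.isHermitian_one
    have h3 : (η • (Fᴴ + F)).IsHermitian := by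
      unfold Matrix.IsHermitian at h1 ⊢
      rw [Matrix.conjTranspose_smul, star_trivial, h1]
    exact h3.sub h2
  · intro w
    set xs : Fin n → ℂ := R⁻¹ *ᵥ (B *ᵥ w) with hxs
    set y : Fin m → ℂ := F *ᵥ w with hy
    have hyCD : y = C *ᵥ xs + D *ᵥ w := by
      rw [hy, hF, Matrix.add_mulVec, ← Matrix.mulVec_mulVec, ← Matrix.mulVec_mulVec, hxs]
    have hBw : B *ᵥ w = R *ᵥ xs := by
      rw [hxs, Matrix.mulVec_mulVec, hRinv, Matrix.one_mulVec]
    set vh : Fin m → ℂ := -(c⁻¹ • (w + y)) with hvh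
    -- state equation
    have hstate : Ahat *ᵥ xs + Bhat *ᵥ vh = s • xs := by
      have h1 : Bhat *ᵥ vh = (B * (1 + D)⁻¹) *ᵥ (w + y) := by
        rw [hBhat, hvh]
        rw [Matrix.neg_mulVec, Matrix.mulVec_neg, neg_neg, Matrix.smul_mulVec,
          Matrix.mulVec_smul, smul_smul, mul_inv_cancel₀ hcne, one_smul]
      have h2 : w + y - C *ᵥ xs = (1 + D) *ᵥ w := by
        rw [hyCD, Matrix.add_mulVec, Matrix.one_mulVec]; abel
      have hsplit : (B * (1 + D)⁻¹ * C) *ᵥ xs = (B * (1 + D)⁻¹) *ᵥ (C *ᵥ xs) :=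
        (Matrix.mulVec_mulVec xs (B * (1 + D)⁻¹) C).symm
      have h3 : (B * (1 + D)⁻¹) *ᵥ (w + y) - (B * (1 + D)⁻¹) *ᵥ (C *ᵥ xs)
          = (B * (1 + D)⁻¹) *ᵥ ((1 + D) *ᵥ w) := by
        rw [← Matrix.mulVec_sub, h2]
      have h4 : (B * (1 + D)⁻¹) *ᵥ ((1 + D) *ᵥ w) = B *ᵥ w := by
        rw [Matrix.mulVec_mulVec, Matrix.mul_assoc, hEDinv, Matrix.mul_one]
      have h5 : A *ᵥ xs + B *ᵥ w = s • xs := by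
        rw [hBw, hR, Matrix.sub_mulVec, Matrix.smul_mulVec, Matrix.one_mulVec]; abel
      rw [hAhat, h1, Matrix.sub_mulVec, hsplit]
      calc A *ᵥ xs - (B * (1 + D)⁻¹) *ᵥ (C *ᵥ xs) + (B * (1 + D)⁻¹) *ᵥ (w + y)
          = A *ᵥ xs + ((B * (1 + D)⁻¹) *ᵥ (w + y) - (B * (1 + D)⁻¹) *ᵥ (C *ᵥ xs)) := by abel
        _ = A *ᵥ xs + B *ᵥ w := by rw [h3, h4]
        _ = s • xs := h5
    -- output equation
    have hout : Chat *ᵥ xs + Dhat *ᵥ vh = -(c⁻¹ • (w - y)) := by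
      have hCxs : C *ᵥ xs = y - D *ᵥ w := by rw [hyCD]; abel
      have key : c • (C *ᵥ xs) - c⁻¹ • ((1 - D) *ᵥ (w + y)) = -(c⁻¹ • ((1 + D) *ᵥ (w - y))) := by
        rw [hCxs, hcinv, Matrix.sub_mulVec, Matrix.add_mulVec, Matrix.one_mulVec,
          Matrix.one_mulVec, Matrix.mulVec_add, Matrix.mulVec_sub]
        module
      have step : Chat *ᵥ xs + Dhat *ᵥ vh
          = (1 + D)⁻¹ *ᵥ (c • (C *ᵥ xs) - c⁻¹ • ((1 - D) *ᵥ (w + y))) := by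
        simp only [hChat, hDhat, hvh, Matrix.smul_mulVec, ← Matrix.mulVec_mulVec,
          Matrix.mulVec_neg, Matrix.mulVec_smul, Matrix.mulVec_sub, smul_neg, neg_smul]
        module
      rw [step, key, Matrix.mulVec_neg, Matrix.mulVec_smul, Matrix.mulVec_mulVec,
        hEDinv, Matrix.one_mulVec]
    -- quadratic form computations
    set q : Fin m → ℂ := Chat *ᵥ xs + Dhat *ᵥ vh with hq
    have hout2 : q = -(c⁻¹ • (w - y)) := by rw [hq]; exact hout
    set h0 : ℂ := star xs ⬝ᵥ (H *ᵥ xs) with hh0def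
    have hp1 : star (Sum.elim xs vh) ⬝ᵥ ((Matrix.fromBlocks (-(H * Ahat) - Ahatᴴ * H)
        (-(H * Bhat)) (-(Bhatᴴ * H)) (1 : Matrix (Fin m) (Fin m) ℂ)) *ᵥ (Sum.elim xs vh))
        = -(s * h0) - star s * h0 + star vh ⬝ᵥ vh := by
      have e1 : star xs ⬝ᵥ ((H * Ahat) *ᵥ xs) + star xs ⬝ᵥ ((H * Bhat) *ᵥ vh) = s * h0 := by
        rw [← Matrix.mulVec_mulVec, ← Matrix.mulVec_mulVec, ← dotProduct_add,
          ← Matrix.mulVec_add, hstate, Matrix.mulVec_smul, dotProduct_smul,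
          smul_eq_mul, hh0def]
      have e2 : star xs ⬝ᵥ ((Ahatᴴ * H) *ᵥ xs) + star vh ⬝ᵥ ((Bhatᴴ * H) *ᵥ xs)
          = star s * h0 := by
        rw [hd, hd, ← add_dotProduct, ← star_add, hstate, star_smul,
          smul_dotProduct, smul_eq_mul, hh0def]
      simp only [star_elim, Matrix.fromBlocks_mulVec, Matrix.dotProduct_block,
        Sum.elim_comp_inl, Sum.elim_comp_inr, Matrix.sub_mulVec, Matrix.neg_mulVec,
        Matrix.one_mulVec, dotProduct_add, dotProduct_sub,
        dotProduct_neg]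
      linear_combination -e1 - e2
    have hp2 : star (Sum.elim xs vh) ⬝ᵥ ((Matrix.fromBlocks (Chatᴴ * Chat) (Chatᴴ * Dhat)
        (Dhatᴴ * Chat) (Dhatᴴ * Dhat)) *ᵥ (Sum.elim xs vh)) = star q ⬝ᵥ q := by
      simp only [star_elim, Matrix.fromBlocks_mulVec, Matrix.dotProduct_block,
        Sum.elim_comp_inl, Sum.elim_comp_inr, dotProduct_add, hd]
      rw [hq, star_add, add_dotProduct, dotProduct_add, dotProduct_add]
    set γ : ℂ := (((η + 1) / (η - 1) : ℝ) : ℂ) with hγdef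
    have hQz' : 0 ≤ (-(s * h0) - star s * h0 + star vh ⬝ᵥ vh) - γ * (star q ⬝ᵥ q) := by
      have hz := hQ.dotProduct_mulVec_nonneg (Sum.elim xs vh)
      rw [Matrix.sub_mulVec, Matrix.smul_mulVec, dotProduct_sub,
        dotProduct_smul, hp1, hp2] at hz
      rw [hγdef]
      rw [Complex.real_smul] at hz
      exact hz
    -- scalar abbreviations
    set a : ℂ := star w ⬝ᵥ y with ha
    set abar : ℂ := star y ⬝ᵥ w with habar
    set b : ℂ := star y ⬝ᵥ y with hb
    set cc : ℂ := star w ⬝ᵥ w with hcc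
    have hvv : star vh ⬝ᵥ vh = 2⁻¹ * (cc + a + abar + b) := by
      rw [hvh, star_neg, star_smul, hcstar, neg_dotProduct, dotProduct_neg,
        neg_neg, smul_dotProduct, dotProduct_smul, smul_eq_mul, smul_eq_mul,
        ← mul_assoc, hii]
      congr 1
      rw [star_add, add_dotProduct, dotProduct_add, dotProduct_add,
        ← ha, ← habar, ← hb, ← hcc]
      ring
    have hqq : star q ⬝ᵥ q = 2⁻¹ * (cc - a - abar + b) := by
      rw [hout2, star_neg, star_smul, hcstar, neg_dotProduct, dotProduct_neg,
        neg_neg, smul_dotProduct, dotProduct_smul, smul_eq_mul, smul_eq_mul,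
        ← mul_assoc, hii]
      congr 1
      rw [star_sub, sub_dotProduct, dotProduct_sub, dotProduct_sub,
        ← ha, ← habar, ← hb, ← hcc]
      ring
    have htarget : star w ⬝ᵥ ((η • (Fᴴ + F) - (Fᴴ * F + 1)) *ᵥ w)
        = (η : ℂ) * (abar + a) - (b + cc) := by
      rw [Matrix.sub_mulVec, Matrix.smul_mulVec, Matrix.add_mulVec Fᴴ F w,
        Matrix.add_mulVec (Fᴴ * F) 1 w, Matrix.one_mulVec, dotProduct_sub,
        dotProduct_smul, dotProduct_add, dotProduct_add, hd1, hd,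
        Complex.real_smul, ← hy, ← ha, ← habar, ← hb, ← hcc]
    have hh0 : 0 ≤ h0 := hH.posSemidef.dotProduct_mulVec_nonneg xs
    have hsum : 0 ≤ (s + star s) * h0 := by
      refine mul_nonneg ?_ hh0
      have h2 : (0 : ℂ) ≤ ((2 * s.re : ℝ) : ℂ) := Complex.zero_le_real.mpr (by linarith)
      rw [Complex.star_def, Complex.add_conj]
      push_cast at h2 ⊢
      exact h2
    have hP : 0 ≤ star vh ⬝ᵥ vh - γ * (star q ⬝ᵥ q) := by
      have e : (-(s * h0) - star s * h0 + star vh ⬝ᵥ vh) - γ * (star q ⬝ᵥ q)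
          = (star vh ⬝ᵥ vh - γ * (star q ⬝ᵥ q)) - (s + star s) * h0 := by ring
      rw [e] at hQz'
      have := add_nonneg hQz' hsum
      simpa using this
    have hηne : ((η : ℂ) - 1) ≠ 0 := by
      rw [sub_ne_zero]
      exact_mod_cast ne_of_gt hη
    have hγ : γ = ((η : ℂ) + 1) / ((η : ℂ) - 1) := by rw [hγdef]; push_cast; ring
    have hTP : (η : ℂ) * (abar + a) - (b + cc)
        = ((η : ℂ) - 1) * (star vh ⬝ᵥ vh - γ * (star q ⬝ᵥ q)) := by
      rw [hvv, hqq, hγ]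
      field_simp
      ring
    have hfin : 0 ≤ ((η : ℂ) - 1) := by
      have h2 : (0 : ℂ) ≤ ((η - 1 : ℝ) : ℂ) := Complex.zero_le_real.mpr (by linarith)
      push_cast at h2
      exact h2
    rw [htarget, hTP]
    exact mul_nonneg hfin hP
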